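/- arXiv:2411.17948 — 5 statements merged into one kernel-verified Lean document; each statement's English description precedes it below -/
import Mathlib

section
/- Let G be a graph with three distinct vertices u, v, x such that any two of u, v, x are twins. Then G has a locating-dominating set of size at most k if and only if G - x has a locating-dominating set of size at most k - 1. -/
/-- A locating-dominating set: a dominating set `S` such that any two distinct
vertices outside `S` have distinct neighbourhoods in `S`. -/
def IsLDSet {V : Type*} (G : SimpleGraph V) (S : Set V) : Prop :=
  (∀ w : V, w ∈ S ∨ ∃ s ∈ S, G.Adj w s) ∧
  ∀ u v : V, u ∉ S → v ∉ S → u ≠ v →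
    G.neighborSet u ∩ S ≠ G.neighborSet v ∩ S

/-- Two vertices are twins if they are false twins or true twins. -/
def Twins {V : Type*} (G : SimpleGraph V) (u v : V) : Prop :=
  G.neighborSet u = G.neighborSet v ∨
  insert u (G.neighborSet u) = insert v (G.neighborSet v)

lemma twin_adj {V : Type*} {G : SimpleGraph V} {a b w : V} (h : Twins G a b)
    (hwa : w ≠ a) (hwb : w ≠ b) : G.Adj w a ↔ G.Adj w b := by
  rcases h with h | h
  · have := Set.ext_iff.mp h w
    simp only [SimpleGraph.mem_neighborSet] at this
    rw [G.adj_comm w a, G.adj_comm w b]; exact this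
  · have := Set.ext_iff.mp h w
    simp only [Set.mem_insert_iff, SimpleGraph.mem_neighborSet, hwa, hwb, false_or] at this
    rw [G.adj_comm w a, G.adj_comm w b]; exact this

lemma twin_mem {V : Type*} {G : SimpleGraph V} {S : Set V}
    (hS : IsLDSet G S) {a b : V} (h : Twins G a b) (hab : a ≠ b) :
    a ∈ S ∨ b ∈ S := by
  by_contra hc
  push_neg at hc
  refine hS.2 a b hc.1 hc.2 hab ?_
  ext s
  simp only [Set.mem_inter_iff, SimpleGraph.mem_neighborSet]
  constructor
  · rintro ⟨hadj, hs⟩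
    refine ⟨?_, hs⟩
    have := twin_adj h (ne_of_mem_of_not_mem hs hc.1) (ne_of_mem_of_not_mem hs hc.2)
    exact ((this.mp hadj.symm)).symm
  · rintro ⟨hadj, hs⟩
    refine ⟨?_, hs⟩
    have := twin_adj h (ne_of_mem_of_not_mem hs hc.1) (ne_of_mem_of_not_mem hs hc.2)
    exact ((this.mpr hadj.symm)).symm

lemma swap_lds {V : Type*} {G : SimpleGraph V} {S : Set V} {a b : V}
    (hS : IsLDSet G S) (h : Twins G a b) (ha : a ∈ S) (hb : b ∉ S) :
    IsLDSet G (insert b (S \ {a})) := by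
  obtain ⟨hdom, hsep⟩ := hS
  have hab : a ≠ b := fun e => hb (e ▸ ha)
  constructor
  · intro w
    by_cases hw : w ∈ insert b (S \ {a})
    · exact Or.inl hw
    right
    simp only [Set.mem_insert_iff, Set.mem_diff, Set.mem_singleton_iff, not_or, not_and,
      not_not] at hw
    by_cases hwa : w = a
    · rw [hwa]
      rcases hdom b with hb' | ⟨s, hs, hadj⟩
      · exact absurd hb' hb
      by_cases hsa : s = a
      · rw [← hsa]
        exact ⟨b, Or.inl rfl, hadj.symm⟩
      · have hsb : s ≠ b := ne_of_mem_of_not_mem hs hb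
        have : G.Adj s a := (twin_adj h hsa hsb).mpr hadj.symm
        exact ⟨s, Or.inr ⟨hs, hsa⟩, this.symm⟩
    · have hwS : w ∉ S := fun hwS => hwa (hw.2 hwS)
      rcases hdom w with h' | ⟨s, hs, hadj⟩
      · exact absurd h' hwS
      by_cases hsa : s = a
      · have : G.Adj w b := (twin_adj h hwa hw.1).mp (hsa ▸ hadj)
        exact ⟨b, Or.inl rfl, this⟩
      · exact ⟨s, Or.inr ⟨hs, hsa⟩, hadj⟩
  · have key : ∀ p q : V, p ∉ insert b (S \ {a}) → q ∉ insert b (S \ {a}) → p ≠ q → q ≠ a →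
        G.neighborSet p ∩ insert b (S \ {a}) ≠ G.neighborSet q ∩ insert b (S \ {a}) := by
      intro p q hp hq hpq hqa
      simp only [Set.mem_insert_iff, Set.mem_diff, Set.mem_singleton_iff, not_or, not_and,
        not_not] at hp hq
      have hqS : q ∉ S := fun hh => hqa (hq.2 hh)
      intro heq
      have heq' : ∀ s : V, s ∈ insert b (S \ {a}) → (G.Adj p s ↔ G.Adj q s) := by
        intro s hs
        have e := Set.ext_iff.mp heq s
        simp only [Set.mem_inter_iff, SimpleGraph.mem_neighborSet, hs, and_true] at e
        exact e
      by_cases hpa : p = a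
      · rw [hpa] at heq'
        refine hsep b q hb hqS (fun e => hq.1 e.symm) ?_
        ext s
        simp only [Set.mem_inter_iff, SimpleGraph.mem_neighborSet]
        refine and_congr_left fun hs => ?_
        by_cases hsa : s = a
        · rw [hsa]
          have c1 : G.Adj b a ↔ G.Adj a b := G.adj_comm b a
          have c2 : G.Adj a b ↔ G.Adj q b := heq' b (Or.inl rfl)
          have c3 : G.Adj q b ↔ G.Adj q a := (twin_adj h hqa hq.1).symm
          rw [c1, c2, c3]
        · have hsb : s ≠ b := ne_of_mem_of_not_mem hs hb
          have c1 : G.Adj b s ↔ G.Adj s b := G.adj_comm b s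
          have c2 : G.Adj s b ↔ G.Adj s a := (twin_adj h hsa hsb).symm
          have c3 : G.Adj s a ↔ G.Adj a s := G.adj_comm s a
          have c4 : G.Adj a s ↔ G.Adj q s := heq' s (Or.inr ⟨hs, hsa⟩)
          rw [c1, c2, c3, c4]
      · have hpS : p ∉ S := fun hh => hpa (hp.2 hh)
        refine hsep p q hpS hqS hpq ?_
        ext s
        simp only [Set.mem_inter_iff, SimpleGraph.mem_neighborSet]
        refine and_congr_left fun hs => ?_
        by_cases hsa : s = a
        · rw [hsa]
          have c1 : G.Adj p a ↔ G.Adj p b := twin_adj h hpa hp.1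
          have c2 : G.Adj p b ↔ G.Adj q b := heq' b (Or.inl rfl)
          have c3 : G.Adj q b ↔ G.Adj q a := (twin_adj h hqa hq.1).symm
          rw [c1, c2, c3]
        · exact heq' s (Or.inr ⟨hs, hsa⟩)
    intro w1 w2 h1' h2' hne
    by_cases hw2 : w2 = a
    · have hw1 : w1 ≠ a := fun e => hne (e.trans hw2.symm)
      exact (key w2 w1 h2' h1' hne.symm hw1).symm
    · exact key w1 w2 h1' h2' hne hw2

lemma reduce_lds {V : Type*} {G : SimpleGraph V} {S : Set V} {x t : V}
    (hS : IsLDSet G S) (hx : x ∈ S) (ht : t ∈ S) (htx : t ≠ x) (htw : Twins G t x) :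
    IsLDSet (G.induce ({x}ᶜ : Set V)) (Subtype.val ⁻¹' S) := by
  obtain ⟨hdom, hsep⟩ := hS
  have htc : t ∈ ({x}ᶜ : Set V) := Set.mem_compl_singleton_iff.mpr htx
  constructor
  · intro w
    have hwx : (w : V) ≠ x := Set.mem_compl_singleton_iff.mp w.2
    by_cases hw : (w : V) ∈ S
    · exact Or.inl hw
    right
    rcases hdom w with h' | ⟨s, hs, hadj⟩
    · exact absurd h' hw
    by_cases hsx : s = x
    · have hwt : (w : V) ≠ t := ne_of_mem_of_not_mem ht hw |>.symm
      have : G.Adj (w : V) t := (twin_adj htw hwt hwx).mpr (hsx ▸ hadj)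
      exact ⟨⟨t, htc⟩, ht, this⟩
    · exact ⟨⟨s, Set.mem_compl_singleton_iff.mpr hsx⟩, hs, hadj⟩
  · intro a b ha hb hab
    have hax : (a : V) ≠ x := Set.mem_compl_singleton_iff.mp a.2
    have hbx : (b : V) ≠ x := Set.mem_compl_singleton_iff.mp b.2
    have haS : (a : V) ∉ S := ha
    have hbS : (b : V) ∉ S := hb
    intro heq
    have heq' : ∀ s : ↥({x}ᶜ : Set V), (s : V) ∈ S →
        (G.Adj (a : V) (s : V) ↔ G.Adj (b : V) (s : V)) := by
      intro s hs
      have e := Set.ext_iff.mp heq s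
      simp only [Set.mem_inter_iff, SimpleGraph.mem_neighborSet, Set.mem_preimage,
        SimpleGraph.comap_adj, Function.Embedding.coe_subtype, hs, and_true] at e
      exact e
    refine hsep a b haS hbS (fun e => hab (Subtype.ext e)) ?_
    ext s
    simp only [Set.mem_inter_iff, SimpleGraph.mem_neighborSet]
    refine and_congr_left fun hs => ?_
    by_cases hsx : s = x
    · rw [hsx]
      have hat : (a : V) ≠ t := ne_of_mem_of_not_mem ht haS |>.symm
      have hbt : (b : V) ≠ t := ne_of_mem_of_not_mem ht hbS |>.symm
      have c1 : G.Adj (a : V) x ↔ G.Adj (a : V) t := (twin_adj htw hat hax).symm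
      have c2 : G.Adj (a : V) t ↔ G.Adj (b : V) t := heq' ⟨t, htc⟩ ht
      have c3 : G.Adj (b : V) t ↔ G.Adj (b : V) x := twin_adj htw hbt hbx
      rw [c1, c2, c3]
    · exact heq' ⟨s, Set.mem_compl_singleton_iff.mpr hsx⟩ hs

lemma preimage_ncard {V : Type*} [Fintype V] {S : Set V} {x : V} (hx : x ∈ S) :
    (Subtype.val ⁻¹' S : Set ↥({x}ᶜ : Set V)).ncard = S.ncard - 1 := by
  have himg : (Subtype.val '' (Subtype.val ⁻¹' S : Set ↥({x}ᶜ : Set V))) = S \ {x} := by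
    rw [Subtype.image_preimage_coe, Set.diff_eq, Set.inter_comm]
  have h2 : (Subtype.val ⁻¹' S : Set ↥({x}ᶜ : Set V)).ncard = (S \ {x}).ncard := by
    rw [← himg, Set.ncard_image_of_injective _ Subtype.val_injective]
  rw [h2, Set.ncard_diff_singleton_of_mem hx]

theorem lds_delete_triple_twin {V : Type*} [Fintype V] [DecidableEq V]
    (G : SimpleGraph V) (u v x : V) (k : ℕ)
    (huv : u ≠ v) (hux : u ≠ x) (hvx : v ≠ x)
    (h1 : Twins G u v) (h2 : Twins G u x) (h3 : Twins G v x) :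
    (∃ S : Set V, IsLDSet G S ∧ S.ncard ≤ k) ↔
    (∃ S : Set ↥({x}ᶜ : Set V),
      IsLDSet (G.induce ({x}ᶜ : Set V)) S ∧ S.ncard ≤ k - 1) := by
  constructor
  · rintro ⟨S, hS, hcard⟩
    by_cases hx : x ∈ S
    · obtain ⟨t, ht, htx, htw⟩ : ∃ t, t ∈ S ∧ t ≠ x ∧ Twins G t x := by
        rcases twin_mem hS h1 huv with hu | hv
        · exact ⟨u, hu, hux, h2⟩
        · exact ⟨v, hv, hvx, h3⟩
      refine ⟨Subtype.val ⁻¹' S, reduce_lds hS hx ht htx htw, ?_⟩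
      rw [preimage_ncard hx]
      omega
    · have hu : u ∈ S := (twin_mem hS h2 hux).resolve_right hx
      have hv : v ∈ S := (twin_mem hS h3 hvx).resolve_right hx
      have hS₂ := swap_lds hS h2 hu hx
      have hxS₂ : x ∈ insert x (S \ {u}) := Set.mem_insert x _
      have hvS₂ : v ∈ insert x (S \ {u}) := Or.inr ⟨hv, huv.symm⟩
      refine ⟨Subtype.val ⁻¹' (insert x (S \ {u})),
        reduce_lds hS₂ hxS₂ hvS₂ hvx h3, ?_⟩
      rw [preimage_ncard hxS₂]
      have hxu : x ∉ S \ {u} := fun h => hx h.1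
      rw [Set.ncard_insert_of_notMem hxu, Set.ncard_diff_singleton_of_mem hu]
      have : 1 ≤ S.ncard := (Set.ncard_pos (Set.toFinite _)).mpr ⟨u, hu⟩
      omega
  · rintro ⟨S', ⟨hdom, hsep⟩, hcard⟩
    have huc : u ∈ ({x}ᶜ : Set V) := hux
    have hne : S'.Nonempty := by
      rcases hdom ⟨u, huc⟩ with h | ⟨s, hs, _⟩
      · exact ⟨_, h⟩
      · exact ⟨s, hs⟩
    have h1le : 1 ≤ S'.ncard := (Set.ncard_pos (Set.toFinite _)).mpr hne
    refine ⟨insert x (Subtype.val '' S'), ⟨?_, ?_⟩, ?_⟩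
    · intro w
      by_cases hwx : w = x
      · exact Or.inl (by rw [hwx]; exact Set.mem_insert x _)
      rcases hdom ⟨w, hwx⟩ with h | ⟨s, hs, hadj⟩
      · exact Or.inl (Or.inr ⟨⟨w, hwx⟩, h, rfl⟩)
      · refine Or.inr ⟨(s : V), Or.inr ⟨s, hs, rfl⟩, ?_⟩
        simpa using hadj
    · intro a b ha hb hab
      have hax : a ≠ x := fun e => ha (by rw [e]; exact Set.mem_insert x _)
      have hbx : b ≠ x := fun e => hb (by rw [e]; exact Set.mem_insert x _)
      have ha' : (⟨a, hax⟩ : ↥({x}ᶜ : Set V)) ∉ S' := fun h => ha (Or.inr ⟨_, h, rfl⟩)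
      have hb' : (⟨b, hbx⟩ : ↥({x}ᶜ : Set V)) ∉ S' := fun h => hb (Or.inr ⟨_, h, rfl⟩)
      intro heq
      refine hsep ⟨a, hax⟩ ⟨b, hbx⟩ ha' hb' (fun e => hab (congrArg Subtype.val e)) ?_
      ext s'
      simp only [Set.mem_inter_iff, SimpleGraph.mem_neighborSet, SimpleGraph.comap_adj,
        Function.Embedding.coe_subtype]
      refine and_congr_left fun hs => ?_
      have hsT : (s' : V) ∈ insert x (Subtype.val '' S') := Or.inr ⟨s', hs, rfl⟩
      have e := Set.ext_iff.mp heq (s' : V)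
      simp only [Set.mem_inter_iff, SimpleGraph.mem_neighborSet, hsT, and_true] at e
      exact e
    · have hxm : x ∉ Subtype.val '' S' := by
        rintro ⟨s, _, e⟩
        exact (Set.mem_compl_singleton_iff.mp s.2) e
      rw [Set.ncard_insert_of_notMem hxm,
        Set.ncard_image_of_injective _ Subtype.val_injective]
      omega
end

section
/- Let (U, ℱ) be a set system with |U| = n ≥ 2 such that for every pair of distinct items u, v ∈ U there exists some test F ∈ ℱ containing exactly one of u and v. Then there exists a subcollection S ⊆ ℱ with |S| ≤ n - 1 such that for every pair of distinct items u, v ∈ U some test in S contains exactly one of u and v. (Bondy's theorem.) -/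
open Finset

theorem bondy_test_cover {α : Type*} [DecidableEq α]
    (U : Finset α) (F : Finset (Finset α)) (hn : 2 ≤ U.card)
    (hsep : ∀ u ∈ U, ∀ v ∈ U, u ≠ v →
      ∃ T ∈ F, (u ∈ T ∧ v ∉ T) ∨ (v ∈ T ∧ u ∉ T)) :
    ∃ S ⊆ F, S.card ≤ U.card - 1 ∧
      ∀ u ∈ U, ∀ v ∈ U, u ≠ v →
        ∃ T ∈ S, (u ∈ T ∧ v ∉ T) ∨ (v ∈ T ∧ u ∉ T) := by
  classical
  set t : Finset (Finset α) → α → Finset (Finset α) :=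
    fun S u => S.filter (fun T => u ∈ T) with ht
  suffices H : ∀ k (S : Finset (Finset α)), S ⊆ F →
      S.card + 1 ≤ (U.image (t S)).card →
      U.card - (U.image (t S)).card ≤ k →
      ∃ S' ⊆ F, S'.card ≤ U.card - 1 ∧
        ∀ u ∈ U, ∀ v ∈ U, u ≠ v →
          ∃ T ∈ S', (u ∈ T ∧ v ∉ T) ∨ (v ∈ T ∧ u ∉ T) by
    have hU : U.Nonempty := Finset.card_pos.mp (by omega)
    obtain ⟨u0, hu0⟩ := hU
    have himg : U.image (t ∅) = {∅} := by
      apply Finset.eq_singleton_iff_nonempty_unique_mem.mpr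
      refine ⟨⟨∅, ?_⟩, ?_⟩
      · exact Finset.mem_image.mpr ⟨u0, hu0, by simp [ht]⟩
      · intro x hx
        obtain ⟨u, _, rfl⟩ := Finset.mem_image.mp hx
        simp [ht]
    exact H U.card ∅ (empty_subset F) (by rw [himg]; simp) (by omega)
  intro k
  induction k with
  | zero =>
    intro S hSF hinv hk
    have hle : (U.image (t S)).card ≤ U.card := Finset.card_image_le
    have heq : (U.image (t S)).card = U.card := by omega
    have hinj : Set.InjOn (t S) U := Finset.card_image_iff.mp heq
    refine ⟨S, hSF, by omega, ?_⟩
    intro u hu v hv huv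
    have hne : t S u ≠ t S v := fun h => huv (hinj hu hv h)
    have : ∃ T, ¬ ((T ∈ t S u) ↔ (T ∈ t S v)) := by
      by_contra h
      push_neg at h
      exact hne (Finset.ext h)
    obtain ⟨T, hT⟩ := this
    simp only [ht, Finset.mem_filter] at hT
    by_cases hTS : T ∈ S
    · refine ⟨T, hTS, ?_⟩
      by_cases hu' : u ∈ T
      · left; refine ⟨hu', fun hv' => hT ?_⟩; tauto
      · right
        refine ⟨?_, hu'⟩
        by_contra hv'
        exact hT (by tauto)
    · exact absurd (by tauto) hT
  | succ k IH =>
    intro S hSF hinv hk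
    have hle : (U.image (t S)).card ≤ U.card := Finset.card_image_le
    by_cases hcase : (U.image (t S)).card = U.card
    · exact IH S hSF hinv (by omega)
    · have hlt : (U.image (t S)).card < U.card := lt_of_le_of_ne hle hcase
      obtain ⟨u, hu, v, hv, huv, htuv⟩ :=
        Finset.exists_ne_map_eq_of_card_lt_of_maps_to hlt
          (fun a ha => Finset.mem_image_of_mem (t S) ha)
      obtain ⟨T, hTF, hsepT⟩ := hsep u hu v hv huv
      set S' : Finset (Finset α) := insert T S with hS'
      have hTS : T ∉ S := by
        intro hTS
        have h1 : T ∈ t S u ↔ T ∈ t S v := by rw [htuv]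
        simp only [ht, Finset.mem_filter] at h1
        tauto
      have hcardS' : S'.card = S.card + 1 := Finset.card_insert_of_notMem hTS
      set f : Finset (Finset α) → Finset (Finset α) := fun X => X.filter (· ∈ S) with hf
      have hpt : ∀ w ∈ U, t S w = f (t S' w) := by
        intro w _
        ext T'
        simp only [ht, hf, hS', Finset.mem_filter, Finset.mem_insert]
        tauto
      have hBA : U.image (t S) = (U.image (t S')).image f := by
        rw [Finset.image_image]
        exact Finset.image_congr hpt
      have ha : t S' u ∈ U.image (t S') := Finset.mem_image_of_mem _ hu
      have hb : t S' v ∈ U.image (t S') := Finset.mem_image_of_mem _ hv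
      have hab : t S' u ≠ t S' v := by
        intro h
        have : T ∈ t S' u ↔ T ∈ t S' v := by rw [h]
        simp only [ht, hS', Finset.mem_filter, Finset.mem_insert] at this
        tauto
      have hfab : f (t S' v) = f (t S' u) := by
        rw [← hpt u hu, ← hpt v hv, htuv]
      have himg2 : (U.image (t S')).image f
          = ((U.image (t S')).erase (t S' v)).image f := by
        conv_lhs => rw [← Finset.insert_erase hb]
        rw [Finset.image_insert]
        apply Finset.insert_eq_self.mpr
        rw [hfab]
        exact Finset.mem_image_of_mem f (Finset.mem_erase.mpr ⟨hab, ha⟩)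
      have hcard1 : (U.image (t S)).card ≤ (U.image (t S')).card - 1 := by
        rw [hBA, himg2]
        calc (((U.image (t S')).erase (t S' v)).image f).card
            ≤ ((U.image (t S')).erase (t S' v)).card := Finset.card_image_le
          _ = (U.image (t S')).card - 1 := Finset.card_erase_of_mem hb
      have hApos : 1 ≤ (U.image (t S')).card := Finset.card_pos.mpr ⟨_, ha⟩
      have hstrict : (U.image (t S)).card + 1 ≤ (U.image (t S')).card := by omega
      refine IH S' (Finset.insert_subset hTF hSF) (by omega) (by omega)
end

section
/- Let G' be a bipartite graph with parts R' and B' with no isolated vertices, and let G be the graph built from G' by the reduction: R = {r_i : r'_i ∈ R'}, B = {b°_j, b*_j : b'_j ∈ B'}, where r_i is adjacent to both b°_j and b*_j when r'_i b'_j ∉ E(G'), and r_i is adjacent only to b°_j when r'_i b'_j ∈ E(G'). Then a vertex r_i ∈ R has N(r_i) ∩ {b°_j, b*_j} of size exactly one if and only if r'_i is adjacent to b'_j in G'; consequently, a set S ⊆ R distinguishes b°_j from b*_j (i.e., N(b°_j) ∩ S ≠ N(b*_j) ∩ S) if and only if the corresponding set S' ⊆ R' dominates b'_j in G'. -/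
/-- The graph built by the reduction from an instance of Red-Blue Dominating Set
(given by the bipartite adjacency `Adj' : ρ → β → Prop`): vertices are
`Sum.inl i` for `r_i` and `Sum.inr (j, false)`/`Sum.inr (j, true)` for
`b°_j`/`b*_j`; `r_i` is adjacent to `b°_j` always and to `b*_j` iff
`r'_i` and `b'_j` are not adjacent. -/
def reductionGraph {ρ β : Type*} (Adj' : ρ → β → Prop) :
    SimpleGraph (ρ ⊕ β × Bool) :=
  SimpleGraph.fromRel (fun x y =>
    match x, y with
    | Sum.inl i, Sum.inr (j, b) => b = false ∨ ¬ Adj' i j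
    | _, _ => False)

lemma reductionGraph_adj {ρ β : Type*} (Adj' : ρ → β → Prop) (i : ρ) (j : β) (b : Bool) :
    (reductionGraph Adj').Adj (Sum.inl i) (Sum.inr (j, b)) ↔ (b = false ∨ ¬ Adj' i j) := by
  simp [reductionGraph, SimpleGraph.fromRel_adj]

theorem reduction_distinguishes_iff_dominates {ρ β : Type*} (Adj' : ρ → β → Prop)
    (hR : ∀ i : ρ, ∃ j : β, Adj' i j) (hB : ∀ j : β, ∃ i : ρ, Adj' i j) :
    (∀ (i : ρ) (j : β),
      ((reductionGraph Adj').neighborSet (Sum.inl i) ∩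
        {Sum.inr (j, false), Sum.inr (j, true)}).ncard = 1 ↔ Adj' i j) ∧
    (∀ (S' : Set ρ) (j : β),
      (reductionGraph Adj').neighborSet (Sum.inr (j, false)) ∩ (Sum.inl '' S') ≠
        (reductionGraph Adj').neighborSet (Sum.inr (j, true)) ∩ (Sum.inl '' S') ↔
      ∃ i ∈ S', Adj' i j) := by
  constructor
  · intro i j
    by_cases h : Adj' i j
    · have hset : (reductionGraph Adj').neighborSet (Sum.inl i) ∩
          {Sum.inr (j, false), Sum.inr (j, true)} = {Sum.inr (j, false)} := by
        ext x
        simp only [Set.mem_inter_iff, SimpleGraph.mem_neighborSet, Set.mem_insert_iff,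
          Set.mem_singleton_iff]
        constructor
        · rintro ⟨hadj, rfl | rfl⟩
          · rfl
          · rw [reductionGraph_adj] at hadj
            simp [h] at hadj
        · rintro rfl
          exact ⟨(reductionGraph_adj Adj' i j false).2 (Or.inl rfl), Or.inl rfl⟩
      rw [hset]
      simp [h]
    · have hset : (reductionGraph Adj').neighborSet (Sum.inl i) ∩
          {Sum.inr (j, false), Sum.inr (j, true)} =
          {Sum.inr (j, false), Sum.inr (j, true)} := by
        apply Set.inter_eq_self_of_subset_right
        rintro x (rfl | rfl)
        · exact (reductionGraph_adj Adj' i j false).2 (Or.inl rfl)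
        · exact (reductionGraph_adj Adj' i j true).2 (Or.inr h)
      rw [hset]
      rw [Set.ncard_pair (by simp)]
      simp [h]
  · intro S' j
    constructor
    · intro hne
      by_contra hno
      push_neg at hno
      apply hne
      ext x
      simp only [Set.mem_inter_iff, SimpleGraph.mem_neighborSet, Set.mem_image]
      constructor
      · rintro ⟨hadj, i, hi, rfl⟩
        refine ⟨((reductionGraph Adj').adj_symm
          ((reductionGraph_adj Adj' i j true).2 (Or.inr (hno i hi)))), i, hi, rfl⟩
      · rintro ⟨hadj, i, hi, rfl⟩
        refine ⟨((reductionGraph Adj').adj_symm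
          ((reductionGraph_adj Adj' i j false).2 (Or.inl rfl))), i, hi, rfl⟩
    · rintro ⟨i, hi, hij⟩ heq
      have hmem : Sum.inl i ∈ (reductionGraph Adj').neighborSet (Sum.inr (j, false)) ∩
          (Sum.inl '' S') := by
        exact ⟨(reductionGraph Adj').adj_symm
          ((reductionGraph_adj Adj' i j false).2 (Or.inl rfl)), i, hi, rfl⟩
      rw [heq] at hmem
      have := hmem.1
      rw [SimpleGraph.mem_neighborSet, (reductionGraph Adj').adj_comm,
        reductionGraph_adj] at this
      simp [hij] at this
end

section
/- Let G be a graph obtained from a graph G' and a rooted tree (T, v) by identifying v with a vertex w of G', so that V(T) ∩ V(G') = {v} and the only edges between V(T)\{v} and V(G')\{v} pass through v. If L is a locating-dominating set of G, then L ∩ V(T) is a set of type A with respect to (T, v), i.e., L ∩ V(T) dominates all vertices of V(T)\{v} and any two vertices of V(T)\((L ∩ V(T)) ∪ {v}) have distinct neighborhoods (within T) in L ∩ V(T). -/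
theorem lds_restriction_to_hanging_tree_is_typeA {W : Type*} [Fintype W]
    (G : SimpleGraph W) (TV GV : Set W) (v : W)
    (hcover : TV ∪ GV = Set.univ)
    (hinter : TV ∩ GV = {v})
    (hsep : ∀ a ∈ TV \ {v}, ∀ b ∈ GV \ {v}, ¬ G.Adj a b)
    (htree : (G.induce TV).IsTree)
    (L : Set W) (hL : IsLDSet G L) :
    (∀ w ∈ TV, w ≠ v → w ∈ L ∩ TV ∨ ∃ s ∈ L ∩ TV, G.Adj w s) ∧
    (∀ u₁ ∈ TV \ (L ∪ {v}), ∀ u₂ ∈ TV \ (L ∪ {v}), u₁ ≠ u₂ →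
      (G.neighborSet u₁ ∩ TV) ∩ (L ∩ TV) ≠ (G.neighborSet u₂ ∩ TV) ∩ (L ∩ TV)) := by

  obtain ⟨hdom, hloc⟩ := hL
  have hvT : v ∈ TV := by
    have : v ∈ TV ∩ GV := by rw [hinter]; exact rfl
    exact this.1
  have key : ∀ u ∈ TV \ ({v} : Set W), ∀ s, G.Adj u s → s ∈ L → s ∈ TV := by
    intro u hu s hadj _
    by_contra hsT
    have hsU : s ∈ TV ∪ GV := by rw [hcover]; trivial
    have hsG : s ∈ GV := hsU.resolve_left hsT
    have hsv : s ≠ v := fun h => hsT (h ▸ hvT)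
    exact hsep u hu s ⟨hsG, hsv⟩ hadj
  constructor
  · intro w hw hwv
    rcases hdom w with h | ⟨s, hsL, hadj⟩
    · exact Or.inl ⟨h, hw⟩
    · exact Or.inr ⟨s, ⟨hsL, key w ⟨hw, hwv⟩ s hadj hsL⟩, hadj⟩
  · have heqset : ∀ u ∈ TV \ ({v} : Set W),
        (G.neighborSet u ∩ TV) ∩ (L ∩ TV) = G.neighborSet u ∩ L := by
      intro u hu
      ext x
      simp only [Set.mem_inter_iff, SimpleGraph.mem_neighborSet]
      constructor
      · rintro ⟨⟨hx1, _⟩, hx2, _⟩; exact ⟨hx1, hx2⟩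
      · rintro ⟨hx1, hx2⟩
        have hxt := key u hu x hx1 hx2
        exact ⟨⟨hx1, hxt⟩, hx2, hxt⟩
    intro u₁ hu₁ u₂ hu₂ hne
    have hu₁' : u₁ ∈ TV \ ({v} : Set W) := ⟨hu₁.1, fun h => hu₁.2 (Or.inr h)⟩
    have hu₂' : u₂ ∈ TV \ ({v} : Set W) := ⟨hu₂.1, fun h => hu₂.2 (Or.inr h)⟩
    rw [heqset u₁ hu₁', heqset u₂ hu₂']
    exact hloc u₁ u₂ (fun h => hu₁.2 (Or.inl h)) (fun h => hu₂.2 (Or.inl h)) hne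
end

section
/- Let G be a graph and let u, v be twins in G (N(u) = N(v) or N[u] = N[v]) with u ≠ v. If L is a locating-dominating set of the graph G - v, then L ∪ {v} is a locating-dominating set of G. -/
theorem lds_add_twin_back {V : Type*} [Fintype V] [DecidableEq V]
    (G : SimpleGraph V) (u v : V) (huv : u ≠ v) (htw : Twins G u v)
    (L : Set ↥({v}ᶜ : Set V))
    (hL : IsLDSet (G.induce ({v}ᶜ : Set V)) L) :
    IsLDSet G (Subtype.val '' L ∪ {v}) := by
  obtain ⟨hdom, hsep⟩ := hL
  constructor
  · intro w
    by_cases hw : w = v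
    · exact Or.inl (Or.inr hw)
    · rcases hdom ⟨w, hw⟩ with h | ⟨s, hs, hadj⟩
      · exact Or.inl (Or.inl ⟨_, h, rfl⟩)
      · exact Or.inr ⟨s.val, Or.inl ⟨s, hs, rfl⟩, hadj⟩
  · intro a b ha hb hab heq
    have hav : a ≠ v := fun h => ha (Or.inr h)
    have hbv : b ≠ v := fun h => hb (Or.inr h)
    set a' : ({v}ᶜ : Set V) := ⟨a, hav⟩ with ha'def
    set b' : ({v}ᶜ : Set V) := ⟨b, hbv⟩ with hb'def
    have ha' : a' ∉ L := fun h => ha (Or.inl ⟨a', h, rfl⟩)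
    have hb' : b' ∉ L := fun h => hb (Or.inl ⟨b', h, rfl⟩)
    have hne : a' ≠ b' := fun h => hab (congrArg Subtype.val h)
    apply hsep a' b' ha' hb' hne
    ext s
    have hsS : s ∈ L → (s : V) ∈ Subtype.val '' L ∪ {v} :=
      fun h => Or.inl ⟨s, h, rfl⟩
    have key := Set.ext_iff.mp heq s.val
    simp only [Set.mem_inter_iff, SimpleGraph.mem_neighborSet, Set.mem_union] at key ⊢
    simp only [SimpleGraph.comap_adj, Function.Embedding.coe_subtype]
    constructor
    · rintro ⟨hadj, hsL⟩
      exact ⟨(key.mp ⟨hadj, hsS hsL⟩).1, hsL⟩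
    · rintro ⟨hadj, hsL⟩
      exact ⟨(key.mpr ⟨hadj, hsS hsL⟩).1, hsL⟩
end
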